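/- Let p > 1 with conjugate exponent q, let (X, d) be a metric space, and let v: [0,T] → X be a curve, φ: X → ℝ a function along the curve, and g ≥ 0. Suppose φ∘v is differentiable a.e. with (φ∘v)'(t) ≤ -(1/p)|v'|(t)^p - (1/q) g(v(t))^q for a.e. t, and suppose g is a strong upper gradient, i.e., |φ(v(t)) - φ(v(τ))| ≤ ∫_τ^t g(v(s))|v'|(s) ds for all τ ≤ t. Then for a.e. t ∈ [0,T]: |v'|(t)^p = g(v(t))^q = -(φ∘v)'(t). -/

import Mathlib

open Real MeasureTheory Filter Set

lemma young_eq {p q : ℝ} (hp : 1 < p) (hpq : 1 / p + 1 / q = 1) {a b : ℝ}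
    (ha : 0 ≤ a) (hb : 0 ≤ b) (h : a * b = a ^ p / p + b ^ q / q) : a ^ p = b ^ q := by
  have hcj : p.HolderConjugate q := Real.holderConjugate_iff.2 ⟨hp, by simpa [one_div] using hpq⟩
  have hq : 1 < q := hcj.symm.lt
  have hp0 : (0:ℝ) < p := by linarith
  have hq0 : (0:ℝ) < q := by linarith
  rcases ha.eq_or_lt with rfl | ha'
  · rw [Real.zero_rpow hp0.ne'] at h ⊢
    simp only [zero_mul, zero_div, zero_add] at h
    have hz := h.symm
    rw [div_eq_zero_iff] at hz
    rcases hz with hz | hz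
    · exact hz.symm
    · exact absurd hz hq0.ne'
  rcases hb.eq_or_lt with rfl | hb'
  · rw [Real.zero_rpow hq0.ne'] at h ⊢
    simp only [mul_zero, zero_div, add_zero] at h
    have hz := h.symm
    rw [div_eq_zero_iff] at hz
    rcases hz with hz | hz
    · exact hz
    · exact absurd hz hp0.ne'
  by_contra hne
  have hap : 0 < a ^ p := Real.rpow_pos_of_pos ha' p
  have hbq : 0 < b ^ q := Real.rpow_pos_of_pos hb' q
  have hlt := strictConcaveOn_log_Ioi.2 (mem_Ioi.2 hap) (mem_Ioi.2 hbq) hne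
    (by positivity : (0:ℝ) < 1/p) (by positivity : (0:ℝ) < 1/q) hpq
  rw [smul_eq_mul, smul_eq_mul, smul_eq_mul, smul_eq_mul, Real.log_rpow ha',
    Real.log_rpow hb'] at hlt
  have h1 : 1/p * (p * Real.log a) + 1/q * (q * Real.log b) = Real.log (a*b) := by
    rw [Real.log_mul ha'.ne' hb'.ne']; field_simp
  have h2 : 1/p * (a^p) + 1/q * (b^q) = a * b := by rw [h]; ring
  rw [h1, h2] at hlt
  exact lt_irrefl _ hlt

/-- equality `|v'|^p = g(v)^q = -(φ∘v)'` a.e. for a curve of maximal slope.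
`A` is the metric derivative `|v'|`, `G = g ∘ v`, `φv = φ ∘ v`, and `D` is the a.e.
derivative of `φ ∘ v`. -/
theorem stmt7 {X : Type*} [MetricSpace X] (p q T : ℝ) (hp : 1 < p)
    (hpq : 1 / p + 1 / q = 1) (hT : 0 < T)
    (v : ℝ → X) (φ : X → ℝ) (A D : ℝ → ℝ)
    -- A is the metric derivative of v
    (hA : ∀ᵐ t ∂(volume.restrict (Set.Icc 0 T)),
      Filter.Tendsto (fun τ => dist (v τ) (v t) / |τ - t|) (nhdsWithin t {t}ᶜ) (nhds (A t)))
    (hAnn : ∀ t, 0 ≤ A t)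
    (hAp : IntervalIntegrable (fun t => A t ^ p) volume 0 T)
    (g : X → ℝ) (hg : ∀ x, 0 ≤ g x)
    (hgA : IntervalIntegrable (fun s => g (v s) * A s) volume 0 T)
    -- φ ∘ v is differentiable a.e. with derivative D satisfying the maximal slope inequality
    (hD : ∀ᵐ t ∂(volume.restrict (Set.Icc 0 T)),
      HasDerivAt (fun s => φ (v s)) (D t) t ∧
        D t ≤ -(1 / p) * A t ^ p - (1 / q) * g (v t) ^ q)
    -- g is a strong upper gradient along v
    (hsug : ∀ τ t : ℝ, 0 ≤ τ → τ ≤ t → t ≤ T →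
      |φ (v t) - φ (v τ)| ≤ ∫ s in τ..t, g (v s) * A s) :
    ∀ᵐ t ∂(volume.restrict (Set.Icc 0 T)),
      A t ^ p = g (v t) ^ q ∧ g (v t) ^ q = -D t := by
  classical
  set G : ℝ → ℝ := fun s => g (v s) * A s with hGdef
  set f : ℝ → ℝ := (Set.Icc (0:ℝ) T).indicator G with hfdef
  have hGint : IntegrableOn G (Set.Icc 0 T) := by
    rw [integrableOn_Icc_iff_integrableOn_Ioc]
    exact hgA.1
  have hfInt : Integrable f := (integrable_indicator_iff measurableSet_Icc).2 hGint
  have hfLoc : LocallyIntegrable f (volume : Measure ℝ) := hfInt.locallyIntegrable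
  have hLeb : ∀ᵐ t ∂(volume : Measure ℝ),
      Filter.Tendsto (fun a => ⨍ y in a, f y)
        ((IsUnifLocDoublingMeasure.vitaliFamily (volume : Measure ℝ) 1).filterAt t)
        (nhds (f t)) :=
    (IsUnifLocDoublingMeasure.vitaliFamily (volume : Measure ℝ) 1).ae_tendsto_average hfLoc
  have hLeb' := ae_restrict_of_ae (s := Set.Icc (0:ℝ) T) hLeb
  have hIoo : ∀ᵐ t ∂(volume.restrict (Set.Icc 0 T)), t ∈ Set.Ioo 0 T := by
    rw [ae_iff, Measure.restrict_apply' measurableSet_Icc]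
    refine measure_mono_null (fun x hx => ?_)
      (((Set.finite_singleton T).insert 0).measure_zero volume)
    simp only [Set.mem_inter_iff, Set.mem_setOf_eq, Set.mem_Ioo, Set.mem_Icc,
      not_and_or, not_lt] at hx
    simp only [Set.mem_insert_iff, Set.mem_singleton_iff]
    rcases hx with ⟨h1 | h1, h2, h3⟩
    · exact Or.inl (le_antisymm h1 h2)
    · exact Or.inr (le_antisymm h3 h1)
  filter_upwards [hD, hLeb', hIoo] with t hDt hLt ht
  obtain ⟨hder, hineq⟩ := hDt
  have hft : f t = g (v t) * A t :=
    Set.indicator_of_mem (Set.mem_Icc.2 ⟨ht.1.le, ht.2.le⟩) G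
  have havg : Filter.Tendsto (fun y => ⨍ s in Set.Icc t y, f s) (nhdsWithin t (Set.Ioi t))
      (nhds (f t)) := hLt.comp (Real.tendsto_Icc_vitaliFamily_right t)
  have habs : Filter.Tendsto (fun y => |slope (fun s => φ (v s)) t y|)
      (nhdsWithin t (Set.Ioi t)) (nhds |D t|) :=
    (continuous_abs.tendsto _).comp
      ((hasDerivAt_iff_tendsto_slope.1 hder).mono_left
        (nhdsWithin_mono _ (fun y hy => ne_of_gt hy)))
  have hbound : ∀ᶠ y in nhdsWithin t (Set.Ioi t),
      |slope (fun s => φ (v s)) t y| ≤ ⨍ s in Set.Icc t y, f s := by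
    filter_upwards [Ioc_mem_nhdsGT_of_mem ⟨le_refl t, ht.2⟩] with y hy
    have hty : t < y := hy.1
    have key := hsug t y ht.1.le hty.le hy.2
    have hsub : Set.Icc t y ⊆ Set.Icc 0 T := Set.Icc_subset_Icc ht.1.le hy.2
    have hif : ∫ s in Set.Icc t y, f s = ∫ s in t..y, G s := by
      rw [intervalIntegral.integral_of_le hty.le, ← integral_Icc_eq_integral_Ioc]
      exact setIntegral_congr_fun measurableSet_Icc
        (fun x hx => Set.indicator_of_mem (hsub hx) G)
    have havg_eq : ⨍ s in Set.Icc t y, f s = (∫ s in t..y, G s) / (y - t) := by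
      rw [setAverage_eq, hif, Real.volume_real_Icc_of_le hty.le,
        smul_eq_mul, inv_mul_eq_div]
    rw [havg_eq, slope_def_field, abs_div, abs_of_pos (by linarith : (0:ℝ) < y - t)]
    exact div_le_div_of_nonneg_right key (by linarith) |>.trans_eq rfl
  have hDle : |D t| ≤ f t := le_of_tendsto_of_tendsto habs havg hbound
  rw [hft] at hDle
  have hcj : p.HolderConjugate q := Real.holderConjugate_iff.2 ⟨hp, by simpa [one_div] using hpq⟩
  have hyoung : A t * g (v t) ≤ A t ^ p / p + g (v t) ^ q / q :=
    Real.young_inequality_of_nonneg (hAnn t) (hg _) hcj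
  have e1 : -(1/p) * A t ^ p - (1/q) * g (v t) ^ q
      = -(A t ^ p / p + g (v t) ^ q / q) := by ring
  rw [e1] at hineq
  have h1 : A t ^ p / p + g (v t) ^ q / q ≤ -D t := by linarith
  have h2 : -D t ≤ A t * g (v t) := by
    calc -D t ≤ |D t| := neg_le_abs _
    _ ≤ g (v t) * A t := hDle
    _ = A t * g (v t) := mul_comm _ _
  have heq : A t * g (v t) = A t ^ p / p + g (v t) ^ q / q :=
    le_antisymm hyoung (by linarith)
  have hpow := young_eq hp hpq (hAnn t) (hg _) heq
  refine ⟨hpow, ?_⟩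
  have hDeq : -D t = A t ^ p / p + g (v t) ^ q / q := le_antisymm (by linarith) h1
  have hsum : g (v t) ^ q / p + g (v t) ^ q / q = g (v t) ^ q := by
    have : g (v t) ^ q / p + g (v t) ^ q / q = g (v t) ^ q * (1/p + 1/q) := by ring
    rw [this, hpq, mul_one]
  rw [hDeq, hpow]
  exact hsum.symm
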